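/- arXiv:2102.03875 — 4 statements merged into one kernel-verified Lean document; each statement's English description precedes it below -/
import Mathlib

section
/- Let X and Y be finite sets and let p : X → ℝ, q : Y → ℝ be strictly positive with ∑_x p_x = ∑_y q_y = 1. Suppose μ̂ belongs to the relative interior of the set of matchings M (interior relative to the affine span of M). If Φ ∈ ℝ^{X×Y} is such that μ̂ maximizes ⟨·, Φ⟩ over M, then Φ is separable, i.e. there exist f : X → ℝ and g : Y → ℝ with Φ_{xy} = f_x + g_y for all (x,y). In particular, a matching in the relative interior of M is not rationalizable. -/
/-!
A linear functional maximized over a convex set at a relative interior point `z` is constant on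
the set: from `z` one can still move a little further away from any other point `ν` of the set,
and linearity then forces `⟨ν, Φ⟩ ≥ ⟨z, Φ⟩`. So all matchings have the same surplus. The
independent coupling `p ⊗ q` has strictly positive entries, so it stays a matching after adding a
small multiple of the cycle `(δ_x - δ_x') ⊗ (δ_y - δ_y')`; the surplus of that cycle,
`Φ x y + Φ x' y' - Φ x y' - Φ x' y`, must therefore vanish, and a function all of whose
cross differences vanish is separable.
-/

open Finset

/-- The set of matchings with marginals `p` and `q`. -/
def matchings {X Y : Type*} [Fintype X] [Fintype Y] (p : X → ℝ) (q : Y → ℝ) :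
    Set (X → Y → ℝ) :=
  {μ | (∀ x y, 0 ≤ μ x y) ∧ (∀ x, ∑ y, μ x y = p x) ∧ (∀ y, ∑ x, μ x y = q y)}

/-- Total surplus `⟨μ, Φ⟩ = ∑_{x,y} μ_{xy} Φ_{xy}`. -/
def pairing {X Y : Type*} [Fintype X] [Fintype Y] (μ Φ : X → Y → ℝ) : ℝ :=
  ∑ x, ∑ y, μ x y * Φ x y

open Filter Topology

theorem Filter.Eventually.exists_gt_of_nhds {α : Type*} [TopologicalSpace α] [LinearOrder α]
    [OrderTopology α] [NoMaxOrder α] [DenselyOrdered α] {a : α} {P : α → Prop}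
    (h : ∀ᶠ t in 𝓝 a, P t) : ∃ t, a < t ∧ P t :=
  let ⟨t, hP, ht⟩ :=
    ((h.filter_mono nhdsWithin_le_nhds).and (self_mem_nhdsWithin (s := Set.Ioi a))).exists
  ⟨t, ht, hP⟩

theorem exists_pos_add_smul_sub_mem_of_mem_intrinsicInterior {V : Type*} [AddCommGroup V]
    [Module ℝ V] [TopologicalSpace V] [IsTopologicalAddGroup V] [ContinuousSMul ℝ V]
    {s : Set V} {z ν : V} (hz : z ∈ intrinsicInterior ℝ s) (hν : ν ∈ s) :
    ∃ t : ℝ, 0 < t ∧ z + t • (z - ν) ∈ s := by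
  obtain ⟨z, hz, rfl⟩ := hz
  have hline : ∀ t : ℝ, (z : V) + t • ((z : V) - ν) ∈ affineSpan ℝ s := fun t => by
    simpa [vsub_eq_sub, vadd_eq_add, add_comm] using
      (affineSpan ℝ s).smul_vsub_vadd_mem t z.2 (subset_affineSpan ℝ s hν) z.2
  have hcont : Continuous fun t : ℝ => (⟨_, hline t⟩ : affineSpan ℝ s) := by fun_prop
  have hnhds : ∀ᶠ t in 𝓝 (0 : ℝ),
      (⟨_, hline t⟩ : affineSpan ℝ s) ∈ interior (((↑) : affineSpan ℝ s → V) ⁻¹' s) :=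
    hcont.continuousAt.preimage_mem_nhds (by simpa using isOpen_interior.mem_nhds hz)
  obtain ⟨t, ht, hts⟩ := hnhds.exists_gt_of_nhds
  exact ⟨t, ht, interior_subset (s := ((↑) : affineSpan ℝ s → V) ⁻¹' s) hts⟩

theorem IsMaxOn.eq_of_mem_intrinsicInterior {V : Type*} [AddCommGroup V]
    [Module ℝ V] [TopologicalSpace V] [IsTopologicalAddGroup V] [ContinuousSMul ℝ V]
    {s : Set V} {z ν : V} (f : V →ₗ[ℝ] ℝ) (hz : z ∈ intrinsicInterior ℝ s)
    (hmax : IsMaxOn f s z) (hν : ν ∈ s) : f ν = f z := by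
  obtain ⟨t, ht, hmem⟩ := exists_pos_add_smul_sub_mem_of_mem_intrinsicInterior hz hν
  have h : f (z + t • (z - ν)) ≤ f z := hmax hmem
  rw [map_add, map_smul, map_sub, smul_eq_mul, add_le_iff_nonpos_right] at h
  exact le_antisymm (hmax hν) (sub_nonpos.1 (nonpos_of_mul_nonpos_right h ht))

theorem exists_eq_add_of_add_eq_add {X Y : Type*} {Φ : X → Y → ℝ}
    (h : ∀ x x' y y', Φ x y + Φ x' y' = Φ x y' + Φ x' y) :
    ∃ (f : X → ℝ) (g : Y → ℝ), ∀ x y, Φ x y = f x + g y := by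
  cases isEmpty_or_nonempty Y with
  | inl hY => exact ⟨0, 0, fun _ y => isEmptyElim y⟩
  | inr hY =>
    obtain ⟨y₀⟩ := hY
    cases isEmpty_or_nonempty X with
    | inl hX => exact ⟨0, 0, fun x _ => isEmptyElim x⟩
    | inr hX =>
      obtain ⟨x₀⟩ := hX
      exact ⟨fun x => Φ x y₀, fun y => Φ x₀ y - Φ x₀ y₀, fun x y => by linarith [h x x₀ y y₀]⟩

section Matchings

variable {X Y : Type*} [Fintype X] [Fintype Y]

def pairingₗ (Φ : X → Y → ℝ) : (X → Y → ℝ) →ₗ[ℝ] ℝ where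
  toFun μ := pairing μ Φ
  map_add' μ ν := by simp only [pairing, Pi.add_apply, add_mul, sum_add_distrib]
  map_smul' c μ := by
    simp only [pairing, Pi.smul_apply, smul_eq_mul, mul_sum, mul_assoc, RingHom.id_apply]

theorem pairingₗ_apply (Φ μ : X → Y → ℝ) : pairingₗ Φ μ = pairing μ Φ := rfl

theorem mul_mem_matchings {p : X → ℝ} {q : Y → ℝ} (hp : ∀ x, 0 ≤ p x) (hq : ∀ y, 0 ≤ q y)
    (hpsum : ∑ x, p x = 1) (hqsum : ∑ y, q y = 1) :
    (fun x y => p x * q y) ∈ matchings p q :=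
  ⟨fun x y => mul_nonneg (hp x) (hq y), fun x => by rw [← mul_sum, hqsum, mul_one],
    fun y => by rw [← sum_mul, hpsum, one_mul]⟩

theorem exists_pos_add_smul_mem_matchings {p : X → ℝ} {q : Y → ℝ} {μ C : X → Y → ℝ}
    (hμ : μ ∈ matchings p q) (hpos : ∀ x y, 0 < μ x y)
    (hrow : ∀ x, ∑ y, C x y = 0) (hcol : ∀ y, ∑ x, C x y = 0) :
    ∃ t : ℝ, 0 < t ∧ μ + t • C ∈ matchings p q := by
  have hpos_near : ∀ᶠ t in 𝓝 (0 : ℝ), ∀ x y, 0 < μ x y + t * C x y :=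
    eventually_all.2 fun x => eventually_all.2 fun y =>
      (Continuous.tendsto (by fun_prop) 0).eventually_const_lt (by simpa using hpos x y)
  obtain ⟨t, ht, hpos_t⟩ := hpos_near.exists_gt_of_nhds
  refine ⟨t, ht, fun x y => (hpos_t x y).le, fun x => ?_, fun y => ?_⟩
  · simp [sum_add_distrib, ← mul_sum, hrow, hμ.2.1]
  · simp [sum_add_distrib, ← mul_sum, hcol, hμ.2.2]

theorem pairing_single_sub_single_mul [DecidableEq X] [DecidableEq Y] (Φ : X → Y → ℝ)
    (x x' : X) (y y' : Y) :
    pairing (fun a b => (Pi.single x 1 - Pi.single x' 1 : X → ℝ) a *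
      (Pi.single y 1 - Pi.single y' 1 : Y → ℝ) b) Φ = Φ x y + Φ x' y' - Φ x y' - Φ x' y := by
  simp only [pairing, Pi.sub_apply, Pi.single_apply, mul_sub, mul_ite, mul_one, mul_zero, sub_mul,
    ite_mul, one_mul, zero_mul, sum_sub_distrib, sum_ite_eq', mem_univ, ↓reduceIte]
  ring

theorem add_eq_add_of_pairing_eq {p : X → ℝ} {q : Y → ℝ} (hp : ∀ x, 0 < p x) (hq : ∀ y, 0 < q y)
    (hpsum : ∑ x, p x = 1) (hqsum : ∑ y, q y = 1) {Φ : X → Y → ℝ} {c : ℝ}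
    (hconst : ∀ μ ∈ matchings p q, pairing μ Φ = c) (x x' : X) (y y' : Y) :
    Φ x y + Φ x' y' = Φ x y' + Φ x' y := by
  classical
  set u : X → ℝ := Pi.single x 1 - Pi.single x' 1
  set v : Y → ℝ := Pi.single y 1 - Pi.single y' 1
  have hprod := mul_mem_matchings (fun a => (hp a).le) (fun b => (hq b).le) hpsum hqsum
  obtain ⟨t, ht, hmem⟩ := exists_pos_add_smul_mem_matchings (C := fun a b => u a * v b) hprod
    (fun a b => mul_pos (hp a) (hq b)) (fun a => by simp [← mul_sum, v])
    (fun b => by simp [← sum_mul, u])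
  have h : pairingₗ Φ (_ + t • _) = pairingₗ Φ _ := (hconst _ hmem).trans (hconst _ hprod).symm
  rw [map_add, map_smul, smul_eq_mul, add_eq_left, mul_eq_zero, or_iff_right ht.ne',
    pairingₗ_apply, pairing_single_sub_single_mul] at h
  linarith

end Matchings

theorem relint_maximizer_separable {X Y : Type*} [Fintype X] [Fintype Y]
    (p : X → ℝ) (q : Y → ℝ)
    (hp : ∀ x, 0 < p x) (hq : ∀ y, 0 < q y)
    (hpsum : ∑ x, p x = 1) (hqsum : ∑ y, q y = 1)
    (μhat : X → Y → ℝ) (hμhat : μhat ∈ intrinsicInterior ℝ (matchings p q))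
    (Φ : X → Y → ℝ)
    (hmax : ∀ μ ∈ matchings p q, pairing μ Φ ≤ pairing μhat Φ) :
    ∃ (f : X → ℝ) (g : Y → ℝ), ∀ x y, Φ x y = f x + g y :=
  exists_eq_add_of_add_eq_add <| add_eq_add_of_pairing_eq hp hq hpsum hqsum fun _ hμ =>
    IsMaxOn.eq_of_mem_intrinsicInterior (pairingₗ Φ) hμhat hmax hμ
end

section
/- Let X and Y be finite sets with |X| ≥ 2 and |Y| ≥ 2, and let p : X → ℝ, q : Y → ℝ be strictly positive with ∑_x p_x = ∑_y q_y = 1. Suppose μ̂ ∈ M lies on the relative boundary of M, i.e. μ̂ ∈ M but μ̂ is not in the relative interior of M. Then there exists a non-separable Φ ∈ ℝ^{X×Y} such that μ̂ maximizes ⟨·, Φ⟩ over M; that is, μ̂ is rationalizable. -/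
/-!
If `μ̂` has a vanishing entry `μ̂ x₀ y₀ = 0`, the surplus `Φ = -δ_{(x₀,y₀)}` rationalizes it, since
`⟨μ, Φ⟩ = -μ x₀ y₀ ≤ 0 = ⟨μ̂, Φ⟩`, and `Φ` is not separable because it violates the rectangle identity
`Φ x₀ y₀ + Φ x₁ y₁ = Φ x₀ y₁ + Φ x₁ y₀` of separable arrays. Otherwise all entries of `μ̂` are positive;
near `μ̂` the affine span of `M` only contains arrays with positive entries and the marginals `p, q`,
i.e. matchings, so `μ̂` lies in the relative interior.
-/

open Finset

section Separable

variable {X Y : Type*}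

def Separable (Φ : X → Y → ℝ) : Prop :=
  ∃ (f : X → ℝ) (g : Y → ℝ), ∀ x y, Φ x y = f x + g y

theorem Separable.add_eq_add {Φ : X → Y → ℝ} (hΦ : Separable Φ) (x₀ x₁ : X) (y₀ y₁ : Y) :
    Φ x₀ y₀ + Φ x₁ y₁ = Φ x₀ y₁ + Φ x₁ y₀ := by
  obtain ⟨f, g, hfg⟩ := hΦ
  simp only [hfg]
  ring

theorem not_separable_single [DecidableEq X] [DecidableEq Y] [Nontrivial X] [Nontrivial Y]
    (x₀ : X) (y₀ : Y) {c : ℝ} (hc : c ≠ 0) :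
    ¬ Separable (Pi.single x₀ (Pi.single y₀ c)) := by
  intro hΦ
  obtain ⟨x₁, hx₁⟩ := exists_ne x₀
  obtain ⟨y₁, hy₁⟩ := exists_ne y₀
  exact hc (by simpa [hx₁, hy₁] using hΦ.add_eq_add x₀ x₁ y₀ y₁)

end Separable

section Matchings

variable {X Y : Type*} [Fintype X] [Fintype Y]

theorem pairing_single [DecidableEq X] [DecidableEq Y] (μ : X → Y → ℝ) (x₀ : X) (y₀ : Y)
    (c : ℝ) : pairing μ (Pi.single x₀ (Pi.single y₀ c)) = μ x₀ y₀ * c := by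
  simp [pairing, Pi.single_apply, ite_apply]

def marginals : (X → Y → ℝ) →ₗ[ℝ] (X → ℝ) × (Y → ℝ) where
  toFun ν := (fun x => ∑ y, ν x y, fun y => ∑ x, ν x y)
  map_add' ν ν' := by ext <;> simp [sum_add_distrib]
  map_smul' c ν := by ext <;> simp [mul_sum]

theorem marginals_eq_of_mem_affineSpan_matchings {p : X → ℝ} {q : Y → ℝ} {ν : X → Y → ℝ}
    (hν : ν ∈ affineSpan ℝ (matchings p q)) : marginals ν = (p, q) := by
  have hmap : marginals.toAffineMap '' (matchings p q) ⊆ {(p, q)} := by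
    rintro _ ⟨μ, hμ, rfl⟩
    exact Prod.ext (funext hμ.2.1) (funext hμ.2.2)
  have hspan := AffineSubspace.mem_map_of_mem marginals.toAffineMap hν
  rw [AffineSubspace.map_span] at hspan
  simpa using affineSpan_mono ℝ hmap hspan

theorem isOpen_setOf_forall_pos : IsOpen {μ : X → Y → ℝ | ∀ x y, 0 < μ x y} := by
  simp only [Set.ofPred_forall]
  exact isOpen_iInter_of_finite fun x => isOpen_iInter_of_finite fun y =>
    isOpen_lt continuous_const ((continuous_apply y).comp (continuous_apply x))

theorem mem_intrinsicInterior_matchings_of_pos {p : X → ℝ} {q : Y → ℝ} {μ : X → Y → ℝ}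
    (hμ : μ ∈ matchings p q) (hpos : ∀ x y, 0 < μ x y) :
    μ ∈ intrinsicInterior ℝ (matchings p q) := by
  rw [mem_intrinsicInterior]
  refine ⟨⟨μ, subset_affineSpan ℝ _ hμ⟩, ?_, rfl⟩
  rw [mem_interior_iff_mem_nhds]
  refine Filter.mem_of_superset
    ((isOpen_setOf_forall_pos.preimage continuous_subtype_val).mem_nhds hpos) ?_
  rintro ⟨ν, hν⟩ hνpos
  have hmarg := marginals_eq_of_mem_affineSpan_matchings hν
  exact ⟨fun x y => (hνpos x y).le, congrFun (congrArg Prod.fst hmarg),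
    congrFun (congrArg Prod.snd hmarg)⟩

end Matchings

theorem relboundary_rationalizable_general {X Y : Type*} [Fintype X] [Fintype Y]
    (hX : 2 ≤ Fintype.card X) (hY : 2 ≤ Fintype.card Y)
    (p : X → ℝ) (q : Y → ℝ)
    (μhat : X → Y → ℝ) (hμhat : μhat ∈ matchings p q)
    (hbd : μhat ∉ intrinsicInterior ℝ (matchings p q)) :
    ∃ Φ : X → Y → ℝ,
      (¬ ∃ (f : X → ℝ) (g : Y → ℝ), ∀ x y, Φ x y = f x + g y) ∧
      ∀ μ ∈ matchings p q, pairing μ Φ ≤ pairing μhat Φ := by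
  classical
  have : Nontrivial X := Fintype.one_lt_card_iff_nontrivial.mp hX
  have : Nontrivial Y := Fintype.one_lt_card_iff_nontrivial.mp hY
  obtain ⟨x₀, y₀, hzero⟩ : ∃ x y, μhat x y = 0 := by
    by_contra! hne
    exact hbd (mem_intrinsicInterior_matchings_of_pos hμhat
      fun x y => (hμhat.1 x y).lt_of_ne' (hne x y))
  refine ⟨Pi.single x₀ (Pi.single y₀ (-1)), not_separable_single x₀ y₀ (by norm_num),
    fun μ hμ => ?_⟩
  rw [pairing_single, pairing_single, hzero]
  linarith [hμ.1 x₀ y₀]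

theorem relboundary_rationalizable {X Y : Type*} [Fintype X] [Fintype Y]
    (hX : 2 ≤ Fintype.card X) (hY : 2 ≤ Fintype.card Y)
    (p : X → ℝ) (q : Y → ℝ)
    (hp : ∀ x, 0 < p x) (hq : ∀ y, 0 < q y)
    (hpsum : ∑ x, p x = 1) (hqsum : ∑ y, q y = 1)
    (μhat : X → Y → ℝ) (hμhat : μhat ∈ matchings p q)
    (hbd : μhat ∉ intrinsicInterior ℝ (matchings p q)) :
    ∃ Φ : X → Y → ℝ,
      (¬ ∃ (f : X → ℝ) (g : Y → ℝ), ∀ x y, Φ x y = f x + g y) ∧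
      ∀ μ ∈ matchings p q, pairing μ Φ ≤ pairing μhat Φ :=
  relboundary_rationalizable_general hX hY p q μhat hμhat hbd
end

section
/- Let X = Y = {1,2} with p = q = (1,1) (each margin equal to 1), and let μ̂ = [[0.7, 0.3],[0.3, 0.7]]. If Φ ∈ ℝ^{2×2} is such that μ̂ maximizes ⟨·, Φ⟩ over M, then Φ_{11} + Φ_{22} = Φ_{12} + Φ_{21}; consequently Φ is separable (Φ_{xy} = f_x + g_y for some f, g), and μ̂ is not rationalizable. -/
open Finset

/-- The matching `[[0.7, 0.3], [0.3, 0.7]]`. -/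
noncomputable def μhat : Fin 2 → Fin 2 → ℝ :=
  fun i j => if i = j then 0.7 else 0.3

/-!
Every entry of `μhat` is at least `0.3`, so `μhat` can be moved by `±0.3` along the cycle
`[[1, -1], [-1, 1]]` without leaving the set of matchings. Surplus is linear in the matching, so
at an interior maximizer its derivative `Φ₀₀ + Φ₁₁ - Φ₀₁ - Φ₁₀` along that cycle must vanish,
and a `2 × 2` surplus with this property is separable.
-/

section General

variable {X Y : Type*} [Fintype X] [Fintype Y]

theorem pairing_add_smul (μ ν Φ : X → Y → ℝ) (t : ℝ) :
    pairing (μ + t • ν) Φ = pairing μ Φ + t * pairing ν Φ := by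
  simp only [pairing, Pi.add_apply, Pi.smul_apply, smul_eq_mul, add_mul, sum_add_distrib,
    mul_sum, mul_assoc]

theorem add_smul_mem_matchings {p : X → ℝ} {q : Y → ℝ} {μ ν : X → Y → ℝ} {t : ℝ}
    (hμ : μ ∈ matchings p q) (hrow : ∀ x, ∑ y, ν x y = 0) (hcol : ∀ y, ∑ x, ν x y = 0)
    (hnonneg : ∀ x y, 0 ≤ μ x y + t * ν x y) :
    μ + t • ν ∈ matchings p q := by
  obtain ⟨-, hμrow, hμcol⟩ := hμ
  refine ⟨hnonneg, fun x => ?_, fun y => ?_⟩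
  · simp [sum_add_distrib, ← mul_sum, hrow, hμrow]
  · simp [sum_add_distrib, ← mul_sum, hcol, hμcol]

theorem pairing_eq_zero_of_le_of_add_smul_mem {p : X → ℝ} {q : Y → ℝ} {μ ν Φ : X → Y → ℝ}
    {t : ℝ} (ht : 0 < t) (hmax : ∀ μ' ∈ matchings p q, pairing μ' Φ ≤ pairing μ Φ)
    (hpos : μ + t • ν ∈ matchings p q) (hneg : μ + (-t) • ν ∈ matchings p q) :
    pairing ν Φ = 0 := by
  have h₁ := hmax _ hpos
  have h₂ := hmax _ hneg
  rw [pairing_add_smul] at h₁ h₂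
  have h : t * pairing ν Φ = 0 := by linarith
  exact (mul_eq_zero.mp h).resolve_left ht.ne'

end General

def swapCycle : Fin 2 → Fin 2 → ℝ :=
  fun i j => if i = j then 1 else -1

theorem pairing_swapCycle (Φ : Fin 2 → Fin 2 → ℝ) :
    pairing swapCycle Φ = Φ 0 0 + Φ 1 1 - (Φ 0 1 + Φ 1 0) := by
  simp only [pairing, swapCycle, ite_mul, one_mul, neg_mul, Fin.sum_univ_two, Fin.isValue,
    ↓reduceIte, zero_ne_one, one_ne_zero]
  ring

theorem swapCycle_row_sum (x : Fin 2) : ∑ y, swapCycle x y = 0 := by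
  fin_cases x <;> simp [swapCycle, Fin.sum_univ_two]

theorem swapCycle_col_sum (y : Fin 2) : ∑ x, swapCycle x y = 0 := by
  fin_cases y <;> simp [swapCycle, Fin.sum_univ_two]

theorem μhat_mem_matchings : μhat ∈ matchings (fun _ => 1) (fun _ => 1) := by
  refine ⟨fun x y => ?_, fun x => ?_, fun y => ?_⟩
  · unfold μhat; split_ifs <;> norm_num
  · fin_cases x <;> norm_num [μhat, Fin.sum_univ_two]
  · fin_cases y <;> norm_num [μhat, Fin.sum_univ_two]

theorem μhat_add_smul_swapCycle_mem {t : ℝ} (ht : |t| ≤ 0.3) :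
    μhat + t • swapCycle ∈ matchings (fun _ => 1) (fun _ => 1) := by
  refine add_smul_mem_matchings μhat_mem_matchings swapCycle_row_sum swapCycle_col_sum
    fun x y => ?_
  obtain ⟨hlo, hhi⟩ := abs_le.mp ht
  unfold μhat swapCycle
  split_ifs <;> linarith

theorem diag_add_eq_antidiag_add_of_le_μhat {Φ : Fin 2 → Fin 2 → ℝ}
    (hmax : ∀ μ ∈ matchings (fun _ : Fin 2 => (1 : ℝ)) (fun _ : Fin 2 => (1 : ℝ)),
      pairing μ Φ ≤ pairing μhat Φ) :
    Φ 0 0 + Φ 1 1 = Φ 0 1 + Φ 1 0 := by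
  have h := pairing_eq_zero_of_le_of_add_smul_mem (t := 0.3) (by norm_num) hmax
    (μhat_add_smul_swapCycle_mem (by norm_num [abs_of_pos]))
    (μhat_add_smul_swapCycle_mem (by norm_num [abs_neg, abs_of_pos]))
  rw [pairing_swapCycle] at h
  linarith

theorem exists_add_of_diag_add_eq {Φ : Fin 2 → Fin 2 → ℝ}
    (h : Φ 0 0 + Φ 1 1 = Φ 0 1 + Φ 1 0) :
    ∃ (f : Fin 2 → ℝ) (g : Fin 2 → ℝ), ∀ x y, Φ x y = f x + g y := by
  refine ⟨fun x => Φ x 0, fun y => Φ 0 y - Φ 0 0, fun x y => ?_⟩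
  fin_cases x <;> fin_cases y <;> simp
  linarith

theorem interior_matching_not_rationalizable :
    (∀ Φ : Fin 2 → Fin 2 → ℝ,
      (∀ μ ∈ matchings (fun _ : Fin 2 => (1 : ℝ)) (fun _ : Fin 2 => (1 : ℝ)),
          pairing μ Φ ≤ pairing μhat Φ) →
        Φ 0 0 + Φ 1 1 = Φ 0 1 + Φ 1 0 ∧
        ∃ (f : Fin 2 → ℝ) (g : Fin 2 → ℝ), ∀ x y, Φ x y = f x + g y) ∧
    ¬ ∃ Φ : Fin 2 → Fin 2 → ℝ,
        (¬ ∃ (f : Fin 2 → ℝ) (g : Fin 2 → ℝ), ∀ x y, Φ x y = f x + g y) ∧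
        ∀ μ ∈ matchings (fun _ : Fin 2 => (1 : ℝ)) (fun _ : Fin 2 => (1 : ℝ)),
          pairing μ Φ ≤ pairing μhat Φ := by
  refine ⟨fun Φ hmax => ⟨diag_add_eq_antidiag_add_of_le_μhat hmax,
    exists_add_of_diag_add_eq (diag_add_eq_antidiag_add_of_le_μhat hmax)⟩, ?_⟩
  rintro ⟨Φ, hnonsep, hmax⟩
  exact hnonsep (exists_add_of_diag_add_eq (diag_add_eq_antidiag_add_of_le_μhat hmax))
end

section
/- Let X and Y be finite sets with |X| ≥ 2 and |Y| ≥ 2, and let p : X → ℝ, q : Y → ℝ be strictly positive with ∑_x p_x = ∑_y q_y = 1. If Φ ∈ ℝ^{X×Y} is such that the independent coupling p ⊗ q (with (p ⊗ q)_{xy} = p_x q_y) maximizes ⟨·, Φ⟩ over M, then Φ is separable, i.e. Φ_{xy} = f_x + g_y for some vectors f, g. In particular, p ⊗ q is never rationalizable. -/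
/-!
Since `p ⊗ q` has full support, it can be moved in both directions `±(c δ) ⊗ (c' δ')`, with
`δ = 1_{x₁} - 1_{x₂}`, `δ' = 1_{y₁} - 1_{y₂}`, `c ≤ p x₁, p x₂` and `c' ≤ q y₁, q y₂`, without leaving
the set of matchings. At such an interior maximum the linear functional `⟨·, Φ⟩` vanishes on these
directions, i.e. every cross difference `Φ x₁ y₁ - Φ x₁ y₂ - Φ x₂ y₁ + Φ x₂ y₂` is zero, and that is
separability.
-/

open Finset

section Dipole

variable {X : Type*} [DecidableEq X]

def dipole (a b : X) : X → ℝ := Pi.single a 1 - Pi.single b 1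

theorem sum_dipole_mul [Fintype X] (a b : X) (f : X → ℝ) :
    ∑ x, dipole a b x * f x = f a - f b := by
  simp [dipole, sub_mul, sum_sub_distrib, Pi.single_apply]

theorem sum_dipole [Fintype X] (a b : X) : ∑ x, dipole a b x = 0 := by
  simpa using sum_dipole_mul a b 1

theorem abs_mul_dipole_le {p : X → ℝ} (hp : ∀ x, 0 ≤ p x) {a b : X} {c : ℝ} (hc : 0 ≤ c)
    (ha : c ≤ p a) (hb : c ≤ p b) (x : X) : |c * dipole a b x| ≤ p x := by
  simp only [dipole, Pi.sub_apply, Pi.single_apply]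
  split_ifs <;> subst_vars <;> simp [abs_of_nonneg hc, *]

end Dipole

section Pairing

variable {X Y : Type*} [Fintype X] [Fintype Y]

theorem pairing_add_mul (μ ν Φ : X → Y → ℝ) (t : ℝ) :
    pairing (fun x y => μ x y + t * ν x y) Φ = pairing μ Φ + t * pairing ν Φ := by
  simp only [pairing, add_mul, sum_add_distrib, mul_sum, mul_assoc]

theorem pairing_mul_apply (d : X → ℝ) (e : Y → ℝ) (Φ : X → Y → ℝ) :
    pairing (fun x y => d x * e y) Φ = ∑ x, d x * ∑ y, e y * Φ x y := by
  simp only [pairing, mul_sum, mul_assoc]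

theorem pairing_eq_zero_of_forall_le {S : Set (X → Y → ℝ)} {μ₀ ν Φ : X → Y → ℝ}
    (hmax : ∀ μ ∈ S, pairing μ Φ ≤ pairing μ₀ Φ)
    (hmem : ∀ t : ℝ, |t| ≤ 1 → (fun x y => μ₀ x y + t * ν x y) ∈ S) :
    pairing ν Φ = 0 := by
  have hplus := hmax _ (hmem 1 (by simp))
  have hminus := hmax _ (hmem (-1) (by simp))
  rw [pairing_add_mul] at hplus hminus
  linarith

end Pairing

theorem product_add_mul_mem_matchings {X Y : Type*} [Fintype X] [Fintype Y]
    {p : X → ℝ} {q : Y → ℝ} (hpsum : ∑ x, p x = 1) (hqsum : ∑ y, q y = 1)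
    {d : X → ℝ} {e : Y → ℝ} (hd : ∀ x, |d x| ≤ p x) (he : ∀ y, |e y| ≤ q y)
    (hdsum : ∑ x, d x = 0) (hesum : ∑ y, e y = 0) {t : ℝ} (ht : |t| ≤ 1) :
    (fun x y => p x * q y + t * (d x * e y)) ∈ matchings p q := by
  refine ⟨fun x y => ?_, fun x => ?_, fun y => ?_⟩
  · have hde : |t * (d x * e y)| ≤ p x * q y := by
      rw [abs_mul, abs_mul]
      calc |t| * (|d x| * |e y|) ≤ 1 * (p x * q y) :=
            mul_le_mul ht (mul_le_mul (hd x) (he y) (abs_nonneg _) ((abs_nonneg _).trans (hd x)))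
              (by positivity) zero_le_one
        _ = p x * q y := one_mul _
    linarith [neg_abs_le (t * (d x * e y))]
  · simp only [sum_add_distrib, ← mul_sum, hqsum, hesum]
    ring
  · simp only [sum_add_distrib, ← mul_sum, ← sum_mul, hpsum, hdsum]
    ring

theorem cross_difference_eq_zero_of_isMax_product {X Y : Type*} [Fintype X] [Fintype Y]
    {p : X → ℝ} {q : Y → ℝ} (hp : ∀ x, 0 < p x) (hq : ∀ y, 0 < q y)
    (hpsum : ∑ x, p x = 1) (hqsum : ∑ y, q y = 1) {Φ : X → Y → ℝ}
    (hmax : ∀ μ ∈ matchings p q, pairing μ Φ ≤ pairing (fun x y => p x * q y) Φ)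
    (x₁ x₂ : X) (y₁ y₂ : Y) :
    Φ x₁ y₁ - Φ x₁ y₂ - Φ x₂ y₁ + Φ x₂ y₂ = 0 := by
  classical
  set c := min (p x₁) (p x₂)
  set c' := min (q y₁) (q y₂)
  have hc : 0 < c := lt_min (hp x₁) (hp x₂)
  have hc' : 0 < c' := lt_min (hq y₁) (hq y₂)
  have hzero := pairing_eq_zero_of_forall_le hmax fun t ht =>
    product_add_mul_mem_matchings hpsum hqsum
      (abs_mul_dipole_le (fun x => (hp x).le) hc.le (min_le_left _ _) (min_le_right _ _))
      (abs_mul_dipole_le (fun y => (hq y).le) hc'.le (min_le_left _ _) (min_le_right _ _))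
      (by rw [← mul_sum, sum_dipole, mul_zero]) (by rw [← mul_sum, sum_dipole, mul_zero]) ht
  have hcross : pairing (fun x y => c * dipole x₁ x₂ x * (c' * dipole y₁ y₂ y)) Φ =
      c * c' * (Φ x₁ y₁ - Φ x₁ y₂ - Φ x₂ y₁ + Φ x₂ y₂) := by
    rw [pairing_mul_apply]
    simp only [mul_assoc, ← mul_sum, sum_dipole_mul]
    ring
  rw [hcross] at hzero
  exact (mul_eq_zero.mp hzero).resolve_left (mul_pos hc hc').ne'

theorem exists_separable_of_cross_difference_eq_zero {X Y : Type*} {Φ : X → Y → ℝ}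
    (h : ∀ x₁ x₂ y₁ y₂, Φ x₁ y₁ - Φ x₁ y₂ - Φ x₂ y₁ + Φ x₂ y₂ = 0) :
    ∃ (f : X → ℝ) (g : Y → ℝ), ∀ x y, Φ x y = f x + g y := by
  rcases isEmpty_or_nonempty X with hX | ⟨⟨x₀⟩⟩
  · exact ⟨0, 0, fun x => isEmptyElim x⟩
  rcases isEmpty_or_nonempty Y with hY | ⟨⟨y₀⟩⟩
  · exact ⟨0, 0, fun _ y => isEmptyElim y⟩
  exact ⟨fun x => Φ x y₀ - Φ x₀ y₀, fun y => Φ x₀ y, fun x y => by linarith [h x x₀ y y₀]⟩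

theorem independent_coupling_not_rationalizable_general {X Y : Type*} [Fintype X] [Fintype Y]
    (p : X → ℝ) (q : Y → ℝ)
    (hp : ∀ x, 0 < p x) (hq : ∀ y, 0 < q y)
    (hpsum : ∑ x, p x = 1) (hqsum : ∑ y, q y = 1) :
    (∀ Φ : X → Y → ℝ,
      (∀ μ ∈ matchings p q, pairing μ Φ ≤ pairing (fun x y => p x * q y) Φ) →
        ∃ (f : X → ℝ) (g : Y → ℝ), ∀ x y, Φ x y = f x + g y) ∧
    ¬ ∃ Φ : X → Y → ℝ,
        (¬ ∃ (f : X → ℝ) (g : Y → ℝ), ∀ x y, Φ x y = f x + g y) ∧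
        ∀ μ ∈ matchings p q, pairing μ Φ ≤ pairing (fun x y => p x * q y) Φ := by
  have separable : ∀ Φ : X → Y → ℝ,
      (∀ μ ∈ matchings p q, pairing μ Φ ≤ pairing (fun x y => p x * q y) Φ) →
        ∃ (f : X → ℝ) (g : Y → ℝ), ∀ x y, Φ x y = f x + g y := fun Φ hmax =>
    exists_separable_of_cross_difference_eq_zero
      (cross_difference_eq_zero_of_isMax_product hp hq hpsum hqsum hmax)
  exact ⟨separable, fun ⟨Φ, hns, hmax⟩ => hns (separable Φ hmax)⟩

theorem independent_coupling_not_rationalizable {X Y : Type*} [Fintype X] [Fintype Y]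
    (hX : 2 ≤ Fintype.card X) (hY : 2 ≤ Fintype.card Y)
    (p : X → ℝ) (q : Y → ℝ)
    (hp : ∀ x, 0 < p x) (hq : ∀ y, 0 < q y)
    (hpsum : ∑ x, p x = 1) (hqsum : ∑ y, q y = 1) :
    (∀ Φ : X → Y → ℝ,
      (∀ μ ∈ matchings p q, pairing μ Φ ≤ pairing (fun x y => p x * q y) Φ) →
        ∃ (f : X → ℝ) (g : Y → ℝ), ∀ x y, Φ x y = f x + g y) ∧
    ¬ ∃ Φ : X → Y → ℝ,
        (¬ ∃ (f : X → ℝ) (g : Y → ℝ), ∀ x y, Φ x y = f x + g y) ∧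
        ∀ μ ∈ matchings p q, pairing μ Φ ≤ pairing (fun x y => p x * q y) Φ :=
  independent_coupling_not_rationalizable_general p q hp hq hpsum hqsum
end
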